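/- arXiv:1611.08143 — 3 statements merged into one kernel-verified Lean document; each statement's English description precedes it below -/
import Mathlib

section
/- Let 𝕋 be a combinatorial tree forcing that has the disjoint maximal antichain property. Then the cofinality of the cardinal cof(t⁰) is strictly greater than 𝔠, i.e. cf(cof(t⁰)) > 2^{ℵ₀}. -/
/-- The restriction `x↾n` of a sequence `x ∈ ω^ω` to its first `n` values, as a finite sequence. -/
def seqRestrict (x : ℕ → ℕ) (n : ℕ) : List ℕ := List.ofFn fun i : Fin n => x i

/-- A tree on `ω`: a nonempty set of finite sequences closed under initial segments. -/
def IsSeqTree (T : Set (List ℕ)) : Prop :=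
  T.Nonempty ∧ ∀ s ∈ T, ∀ t : List ℕ, t <+: s → t ∈ T

/-- `[T]`, the set of branches of a tree `T ⊆ ω^{<ω}`. -/
def branches (T : Set (List ℕ)) : Set (ℕ → ℕ) := {x | ∀ n : ℕ, seqRestrict x n ∈ T}

/-- `S` and `T` are compatible in `𝕋` (ordered by inclusion) if they have a common extension. -/
def Compat (𝕋 : Set (Set (List ℕ))) (S T : Set (List ℕ)) : Prop :=
  ∃ R ∈ 𝕋, R ⊆ S ∧ R ⊆ T

/-- A combinatorial tree forcing: a collection `𝕋` of trees on `ω` containing the full tree,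
closed under restrictions `T_s`, with large disjoint antichains, and homogeneous. -/
structure CombTreeForcing (𝕋 : Set (Set (List ℕ))) : Prop where
  /-- every member of `𝕋` is a tree -/
  isTree : ∀ T ∈ 𝕋, IsSeqTree T
  /-- (1) `ω^{<ω} ∈ 𝕋` -/
  univ_mem : (Set.univ : Set (List ℕ)) ∈ 𝕋
  /-- (2) closure under subtrees `T_s` -/
  restrict_mem : ∀ T ∈ 𝕋, ∀ s ∈ T, {t ∈ T | s <+: t ∨ t <+: s} ∈ 𝕋
  /-- (3) large disjoint antichains: a continuous `f : ω^ω → 2^ω` all of whose fibers are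
  branch sets of trees in `𝕋` -/
  large_disjoint : ∃ f : (ℕ → ℕ) → (ℕ → Bool), Continuous f ∧
      ∀ x : ℕ → Bool, ∃ T ∈ 𝕋, f ⁻¹' {x} = branches T
  /-- (4) homogeneity: below every `T ∈ 𝕋` there is an order-preserving injective copy
  `i : ω^{<ω} → T` of the full tree inducing a homeomorphism `g : ω^ω → [T]`,
  `g(x) = ⋃_n i(x↾n)`, such that `S ∈ 𝕋` iff the downward closure of `i''S` is in `𝕋`. -/
  homogeneity : ∀ T ∈ 𝕋, ∃ i : List ℕ → List ℕ,
      Function.Injective i ∧ (∀ s t : List ℕ, s <+: t → i s <+: i t) ∧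
      (∀ s : List ℕ, i s ∈ T) ∧
      ∃ g : (ℕ → ℕ) → (ℕ → ℕ),
        (∀ (x : ℕ → ℕ) (n : ℕ),
          i (seqRestrict x n) = seqRestrict (g x) (i (seqRestrict x n)).length) ∧
        Topology.IsEmbedding g ∧ Set.range g = branches T ∧
        ∀ S : Set (List ℕ), IsSeqTree S → (S ∈ 𝕋 ↔ {t | ∃ s ∈ S, t <+: i s} ∈ 𝕋)

/-- `𝕋` has the disjoint maximal antichain property: there is a maximal antichain
`(T_α : α < 𝔠)` in `𝕋` with `[T_α] ∩ [T_β] = ∅` for `α ≠ β`. -/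
def DisjointMaxAntichainProp (𝕋 : Set (Set (List ℕ))) : Prop :=
  ∃ (ι : Type) (Tfam : ι → Set (List ℕ)),
    Cardinal.mk ι = Cardinal.continuum ∧
    (∀ a : ι, Tfam a ∈ 𝕋) ∧
    (∀ a b : ι, a ≠ b → ¬ Compat 𝕋 (Tfam a) (Tfam b)) ∧
    (∀ T ∈ 𝕋, ∃ a : ι, Compat 𝕋 T (Tfam a)) ∧
    (∀ a b : ι, a ≠ b → branches (Tfam a) ∩ branches (Tfam b) = ∅)

/-- The tree ideal `t⁰` associated with `𝕋`: all `X ⊆ ω^ω` such that below every `T ∈ 𝕋`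
there is `S ∈ 𝕋` with `X ∩ [S] = ∅`. -/
def treeIdeal (𝕋 : Set (Set (List ℕ))) : Set (Set (ℕ → ℕ)) :=
  {X | ∀ T ∈ 𝕋, ∃ S ∈ 𝕋, S ⊆ T ∧ X ∩ branches S = ∅}

/-- The cofinality `cof(I)` of an ideal `I`: the least cardinality of a family `J ⊆ I`
such that every member of `I` is contained in a member of `J`. -/
noncomputable def idealCof (I : Set (Set (ℕ → ℕ))) : Cardinal :=
  sInf {c : Cardinal | ∃ J ⊆ I, Cardinal.mk J = c ∧ ∀ X ∈ I, ∃ Y ∈ J, X ⊆ Y}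

/-!
Let `κ = cof(t⁰)`, fix a cofinal family `J ⊆ t⁰` of size `κ`, and suppose `cf κ ≤ 𝔠`; then
`J = ⋃_{α < 𝔠} J_α` with `|J_α| < κ`. Let `(T_α)` be the disjoint maximal antichain and
`g_α : ω^ω → [T_α]` the homeomorphisms given by homogeneity. Pulling back along `g_α` preserves
`t⁰`, so `{g_α⁻¹ X : X ∈ J_α}` is not cofinal and some `Y_α ∈ t⁰` is contained in none of its
members. Pushing forward along `g_α` keeps `Y_α` null below `T_α`, so by maximality and
disjointness of the antichain `⋃_α g_α[Y_α] ∈ t⁰`. This union lies in some `X ∈ J`, say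
`X ∈ J_α`, and then `Y_α ⊆ g_α⁻¹ X`, a contradiction. The decomposition of `J` needs `κ`
infinite, which holds since `t⁰` contains all singletons, is closed under finite unions and does
not contain `ω^ω`.
-/

universe u

open PiNat (cylinder)

@[simp]
lemma length_seqRestrict (x : ℕ → ℕ) (n : ℕ) : (seqRestrict x n).length = n :=
  List.length_ofFn

@[simp]
lemma getElem_seqRestrict (x : ℕ → ℕ) {n k : ℕ} (h : k < (seqRestrict x n).length) :
    (seqRestrict x n)[k] = x k := by
  simp [seqRestrict]

lemma seqRestrict_eq_seqRestrict_iff {x y : ℕ → ℕ} {n : ℕ} :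
    seqRestrict x n = seqRestrict y n ↔ x ∈ cylinder y n := by
  simp [seqRestrict, funext_iff, Fin.forall_iff]

lemma seqRestrict_prefix_seqRestrict (x : ℕ → ℕ) {m n : ℕ} (h : m ≤ n) :
    seqRestrict x m <+: seqRestrict x n := by
  rw [List.prefix_iff_eq_take]
  exact List.ext_getElem (by simp [h]) fun k _ _ => by simp

lemma prefix_seqRestrict_iff {x : ℕ → ℕ} {n : ℕ} {l : List ℕ} :
    l <+: seqRestrict x n ↔ l.length ≤ n ∧ seqRestrict x l.length = l := by
  refine ⟨fun h => ?_, fun ⟨hl, h⟩ => h ▸ seqRestrict_prefix_seqRestrict x (by simpa using hl)⟩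
  have hl : l.length ≤ n := by simpa using h.length_le
  have hx := seqRestrict_prefix_seqRestrict x hl
  exact ⟨hl, (List.prefix_of_prefix_length_le hx h (by simp)).eq_of_length (by simp)⟩

lemma exists_seqRestrict_ne {x y : ℕ → ℕ} (h : x ≠ y) : ∃ n, seqRestrict x n ≠ seqRestrict y n :=
  ⟨PiNat.firstDiff x y + 1, fun hxy =>
    PiNat.apply_firstDiff_ne h (seqRestrict_eq_seqRestrict_iff.1 hxy _ (Nat.lt_succ_self _))⟩

def extendConst (s : List ℕ) (c : ℕ) : ℕ → ℕ := fun k => s[k]?.getD c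

@[simp]
lemma seqRestrict_extendConst (s : List ℕ) (c : ℕ) :
    seqRestrict (extendConst s c) s.length = s :=
  List.ext_getElem (by simp) fun k _ h => by simp [extendConst, h]

@[simp]
lemma extendConst_length (s : List ℕ) (c : ℕ) : extendConst s c s.length = c := by
  simp [extendConst]

lemma exists_cylinder_preimage_subset {X : Type*} [TopologicalSpace X] {g : X → ℕ → ℕ}
    (hg : Topology.IsInducing g) {x : X} {U : Set X} (hU : U ∈ nhds x) :
    ∃ m, g ⁻¹' cylinder (g x) m ⊆ U := by
  rw [hg.nhds_eq_comap] at hU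
  obtain ⟨V, hV, hVU⟩ := Filter.mem_comap.1 hU
  obtain ⟨_, ⟨y, m, rfl⟩, hgx, hsub⟩ :=
    (PiNat.isTopologicalBasis_cylinders fun _ => ℕ).mem_nhds_iff.1 hV
  rw [PiNat.mem_cylinder_iff_eq] at hgx
  exact ⟨m, fun z hz => hVU (hsub (hgx ▸ hz))⟩

lemma branches_mono {S T : Set (List ℕ)} (h : S ⊆ T) : branches S ⊆ branches T :=
  fun _ hx n => h (hx n)

@[simp]
lemma branches_univ : branches Set.univ = Set.univ :=
  Set.eq_univ_of_forall fun _ _ => trivial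

def PrefixClosed (S : Set (List ℕ)) : Prop := ∀ s ∈ S, ∀ t : List ℕ, t <+: s → t ∈ S

/-- The paper's `T_s`. -/
def subtreeThrough (T : Set (List ℕ)) (s : List ℕ) : Set (List ℕ) :=
  {t ∈ T | s <+: t ∨ t <+: s}

lemma seqRestrict_eq_of_mem_branches_subtreeThrough {T : Set (List ℕ)} {s : List ℕ}
    {x : ℕ → ℕ} (hx : x ∈ branches (subtreeThrough T s)) : seqRestrict x s.length = s := by
  rcases (hx s.length).2 with h | h
  · exact (h.eq_of_length (by simp)).symm
  · exact h.eq_of_length (by simp)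

open Cardinal Set in
theorem Cardinal.exists_iUnion_eq_univ_of_cof_ord_le {α ι : Type u} (hα : ℵ₀ ≤ #α)
    (h : (#α).ord.cof ≤ #ι) : ∃ F : ι → Set α, (∀ a, #(F a) < #α) ∧ ⋃ a, F a = Set.univ := by
  obtain ⟨e⟩ : Nonempty (α ≃ (#α).ord.ToType) := Cardinal.eq.1 (mk_ord_toType _).symm
  obtain ⟨S, hS, hSc⟩ := Order.exists_cof_eq (#α).ord.ToType
  rw [Ordinal.cof_toType] at hSc
  have : Nonempty S := by
    obtain ⟨x⟩ := (infinite_iff.2 hα).nonempty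
    obtain ⟨y, hy, -⟩ := hS (e x)
    exact ⟨⟨y, hy⟩⟩
  obtain ⟨σ, hσ⟩ : ∃ σ : ι → S, σ.Surjective := by
    obtain ⟨f⟩ := (hSc ▸ h : #S ≤ #ι)
    exact ⟨_, Function.invFun_surjective f.injective⟩
  refine ⟨fun a => e ⁻¹' Iic (σ a : (#α).ord.ToType), fun a => ?_, ?_⟩
  · rw [mk_preimage_equiv]
    exact (mk_Iic_lt _ (by simp) (by simpa using hα)).trans_eq (by simp)
  · refine eq_univ_of_forall fun x => ?_
    obtain ⟨y, hy, hxy⟩ := hS (e x)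
    obtain ⟨a, ha⟩ := hσ ⟨y, hy⟩
    exact mem_iUnion.2 ⟨a, by simpa [ha] using hxy⟩

lemma exists_cofinal_card_eq_idealCof (I : Set (Set (ℕ → ℕ))) :
    ∃ J ⊆ I, Cardinal.mk J = idealCof I ∧ ∀ X ∈ I, ∃ Y ∈ J, X ⊆ Y :=
  csInf_mem (s := {c | ∃ J ⊆ I, Cardinal.mk J = c ∧ ∀ X ∈ I, ∃ Y ∈ J, X ⊆ Y})
    ⟨_, I, subset_rfl, rfl, fun X hX => ⟨X, hX, subset_rfl⟩⟩

lemma idealCof_le {I J : Set (Set (ℕ → ℕ))} (hJI : J ⊆ I) (hJ : ∀ X ∈ I, ∃ Y ∈ J, X ⊆ Y) :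
    idealCof I ≤ Cardinal.mk J :=
  csInf_le' ⟨J, hJI, rfl, hJ⟩

lemma exists_forall_not_subset_of_lt_idealCof {I : Set (Set (ℕ → ℕ))} {K : Type}
    {W : K → Set (ℕ → ℕ)} (hW : ∀ k, W k ∈ I) (hlt : Cardinal.mk K < idealCof I) :
    ∃ Y ∈ I, ∀ k, ¬ Y ⊆ W k := by
  by_contra! h
  refine hlt.not_ge ((idealCof_le (Set.range_subset_iff.2 hW) fun X hX => ?_).trans
    Cardinal.mk_range_le)
  obtain ⟨k, hk⟩ := h X hX
  exact ⟨W k, Set.mem_range_self k, hk⟩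

lemma aleph0_le_idealCof {I : Set (Set (ℕ → ℕ))}
    (hsUnion : ∀ J ⊆ I, J.Finite → ⋃₀ J ∈ I) (hsingleton : ∀ x, {x} ∈ I)
    (huniv : Set.univ ∉ I) : Cardinal.aleph0 ≤ idealCof I := by
  obtain ⟨J, hJI, hJ, hJcof⟩ := exists_cofinal_card_eq_idealCof I
  by_contra! hfin
  refine huniv (Set.eq_univ_of_forall (fun x => ?_) ▸ hsUnion J hJI ?_)
  · obtain ⟨Y, hY, hxY⟩ := hJcof _ (hsingleton x)
    exact ⟨Y, hY, hxY rfl⟩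
  · exact Cardinal.lt_aleph0_iff_set_finite.1 (hJ ▸ hfin)

/-- The maps `i = emb : ω^{<ω} → T` and `g = branchMap : ω^ω → [T]` of the homogeneity
axiom, without its condition on membership in `𝕋` (see `TreeCopy.IsHomogeneous`). -/
structure TreeCopy (T : Set (List ℕ)) where
  emb : List ℕ → List ℕ
  branchMap : (ℕ → ℕ) → (ℕ → ℕ)
  injective : Function.Injective emb
  monotone : ∀ s t : List ℕ, s <+: t → emb s <+: emb t
  mem : ∀ s : List ℕ, emb s ∈ T
  emb_seqRestrict : ∀ (x : ℕ → ℕ) (n : ℕ),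
    emb (seqRestrict x n) = seqRestrict (branchMap x) (emb (seqRestrict x n)).length
  isEmbedding : Topology.IsEmbedding branchMap
  range_branchMap : Set.range branchMap = branches T

namespace TreeCopy

variable {T : Set (List ℕ)} (c : TreeCopy T)

def treeImage (S : Set (List ℕ)) : Set (List ℕ) := {t | ∃ s ∈ S, t <+: c.emb s}

def IsHomogeneous (𝕋 : Set (Set (List ℕ))) : Prop :=
  ∀ S : Set (List ℕ), IsSeqTree S → (S ∈ 𝕋 ↔ c.treeImage S ∈ 𝕋)

lemma treeImage_mono {S S' : Set (List ℕ)} (h : S ⊆ S') : c.treeImage S ⊆ c.treeImage S' :=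
  fun _ ⟨s, hs, ht⟩ => ⟨s, h hs, ht⟩

lemma le_length_emb_seqRestrict (y : ℕ → ℕ) (n : ℕ) : n ≤ (c.emb (seqRestrict y n)).length := by
  induction n with
  | zero => exact Nat.zero_le _
  | succ n ih =>
    have hp := c.monotone _ _ (seqRestrict_prefix_seqRestrict y n.le_succ)
    refine ih.trans_lt (lt_of_le_of_ne hp.length_le fun h => ?_)
    simpa using congrArg List.length (c.injective (hp.eq_of_length h))

lemma seqRestrict_branchMap_prefix (y : ℕ → ℕ) (n : ℕ) :
    seqRestrict (c.branchMap y) n <+: c.emb (seqRestrict y n) := by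
  rw [c.emb_seqRestrict y n]
  exact seqRestrict_prefix_seqRestrict _ (c.le_length_emb_seqRestrict y n)

lemma branchMap_mem_branches_iff {R : Set (List ℕ)} (hR : PrefixClosed R) {y : ℕ → ℕ} :
    c.branchMap y ∈ branches R ↔ ∀ n, c.emb (seqRestrict y n) ∈ R := by
  refine ⟨fun hy n => c.emb_seqRestrict y n ▸ hy _, fun hy n => ?_⟩
  exact hR _ (hy n) _ (c.seqRestrict_branchMap_prefix y n)

lemma branchMap_mem_branches (x : ℕ → ℕ) : c.branchMap x ∈ branches T :=
  c.range_branchMap ▸ Set.mem_range_self x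

/-- Inverting `branchMap` is where its continuity enters: a long enough initial segment of
`branchMap y` pins down `y ↾ n`. -/
lemma branches_treeImage (hT : PrefixClosed T) {S : Set (List ℕ)} (hS : PrefixClosed S) :
    branches (c.treeImage S) = c.branchMap '' branches S := by
  refine subset_antisymm (fun x hx => ?_) ?_
  · obtain ⟨y, rfl⟩ : x ∈ Set.range c.branchMap := c.range_branchMap ▸ fun m => by
      obtain ⟨s, -, hs⟩ := hx m
      exact hT _ (c.mem s) _ hs
    refine ⟨y, fun n => ?_, rfl⟩
    obtain ⟨m, hm⟩ := exists_cylinder_preimage_subset c.isEmbedding.isInducing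
      ((PiNat.isOpen_cylinder _ y n).mem_nhds (PiNat.self_mem_cylinder y n))
    obtain ⟨s, hsS, hs⟩ := hx m
    -- `w` extends `s` but leaves `y` at position `s.length`
    set w := extendConst s (y s.length + 1)
    have hw : seqRestrict (c.branchMap w) m = seqRestrict (c.branchMap y) m := by
      have hsw : c.emb s = seqRestrict (c.branchMap w) (c.emb s).length := by
        simpa [w] using c.emb_seqRestrict w s.length
      rw [hsw] at hs
      simpa using (prefix_seqRestrict_iff.1 hs).2
    have hwy : w ∈ PiNat.cylinder y n := hm (seqRestrict_eq_seqRestrict_iff.1 hw)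
    have hn : n ≤ s.length := by
      by_contra! hlt
      simpa [w] using hwy _ hlt
    rw [← seqRestrict_eq_seqRestrict_iff.2 hwy]
    exact hS _ hsS _ (seqRestrict_extendConst s _ ▸ seqRestrict_prefix_seqRestrict w hn)
  · rintro _ ⟨y, hy, rfl⟩ n
    exact ⟨seqRestrict y n, hy n, c.seqRestrict_branchMap_prefix y n⟩

end TreeCopy

namespace CombTreeForcing

variable {𝕋 : Set (Set (List ℕ))} (h𝕋 : CombTreeForcing 𝕋)
include h𝕋

lemma exists_treeCopy {T : Set (List ℕ)} (hT : T ∈ 𝕋) : ∃ c : TreeCopy T, c.IsHomogeneous 𝕋 := by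
  obtain ⟨i, hinj, hmono, hmem, g, hg, hemb, hrange, hiff⟩ := h𝕋.homogeneity T hT
  exact ⟨⟨i, g, hinj, hmono, hmem, hg, hemb, hrange⟩, hiff⟩

lemma prefixClosed {T : Set (List ℕ)} (hT : T ∈ 𝕋) : PrefixClosed T :=
  (h𝕋.isTree T hT).2

lemma branches_nontrivial {T : Set (List ℕ)} (hT : T ∈ 𝕋) : (branches T).Nontrivial := by
  obtain ⟨c, -⟩ := h𝕋.exists_treeCopy hT
  refine ⟨_, c.branchMap_mem_branches 0, _, c.branchMap_mem_branches 1, fun h => ?_⟩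
  simpa using congrFun (c.isEmbedding.injective h) 0

lemma exists_mem_branches_seqRestrict_eq {R : Set (List ℕ)} (hR : R ∈ 𝕋) {r : List ℕ}
    (hr : r ∈ R) : ∃ x ∈ branches R, seqRestrict x r.length = r := by
  obtain ⟨x, hx⟩ := (h𝕋.branches_nontrivial (h𝕋.restrict_mem R hR r hr)).nonempty
  exact ⟨x, branches_mono (Set.sep_subset _ _) hx,
    seqRestrict_eq_of_mem_branches_subtreeThrough hx⟩

lemma subset_of_branches_subset {R S : Set (List ℕ)} (hR : R ∈ 𝕋)
    (h : branches R ⊆ branches S) : R ⊆ S := by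
  intro r hr
  obtain ⟨x, hxR, hxr⟩ := h𝕋.exists_mem_branches_seqRestrict_eq hR hr
  exact hxr ▸ h hxR r.length

end CombTreeForcing

def IsNullBelow (𝕋 : Set (Set (List ℕ))) (T : Set (List ℕ)) (Z : Set (ℕ → ℕ)) : Prop :=
  ∀ R ∈ 𝕋, R ⊆ T → ∃ S ∈ 𝕋, S ⊆ R ∧ Z ∩ branches S = ∅

namespace TreeCopy

variable {𝕋 : Set (Set (List ℕ))} {T : Set (List ℕ)} (c : TreeCopy T)
  (h𝕋 : CombTreeForcing 𝕋) (hT : T ∈ 𝕋) (hc : c.IsHomogeneous 𝕋)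
include h𝕋 hT hc

lemma exists_treeImage_eq {S R : Set (List ℕ)} (hS : S ∈ 𝕋) (hR : R ∈ 𝕋)
    (hRS : R ⊆ c.treeImage S) : ∃ P ∈ 𝕋, P ⊆ S ∧ c.treeImage P = R := by
  have hRcl := h𝕋.prefixClosed hR
  set P := {s ∈ S | c.emb s ∈ R}
  have hbelow : ∀ r ∈ R, ∃ y ∈ branches P, r <+: c.emb (seqRestrict y r.length) := by
    intro r hr
    obtain ⟨x, hxR, hxr⟩ := h𝕋.exists_mem_branches_seqRestrict_eq hR hr
    have hx := branches_mono hRS hxR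
    rw [c.branches_treeImage (h𝕋.prefixClosed hT) (h𝕋.prefixClosed hS)] at hx
    obtain ⟨y, hyS, rfl⟩ := hx
    refine ⟨y, fun n => ⟨hyS n, (c.branchMap_mem_branches_iff hRcl).1 hxR n⟩, ?_⟩
    have := c.seqRestrict_branchMap_prefix y r.length
    rwa [hxr] at this
  have himage : c.treeImage P = R := by
    refine subset_antisymm (fun t ⟨s, hs, ht⟩ => hRcl _ hs.2 _ ht) fun r hr => ?_
    obtain ⟨y, hy, hr⟩ := hbelow r hr
    exact ⟨_, hy _, hr⟩
  have hPtree : IsSeqTree P := by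
    refine ⟨?_, fun s hs t ht =>
      ⟨h𝕋.prefixClosed hS _ hs.1 _ ht, hRcl _ hs.2 _ (c.monotone _ _ ht)⟩⟩
    obtain ⟨r, hr⟩ := (h𝕋.isTree R hR).1
    obtain ⟨y, hy, -⟩ := hbelow r hr
    exact ⟨_, hy 0⟩
  exact ⟨P, (hc P hPtree).2 (himage ▸ hR), Set.sep_subset _ _, himage⟩

lemma preimage_mem_treeIdeal {X : Set (ℕ → ℕ)} (hX : X ∈ treeIdeal 𝕋) :
    c.branchMap ⁻¹' X ∈ treeIdeal 𝕋 := by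
  intro S hS
  obtain ⟨R, hR, hRS, hXR⟩ := hX _ ((hc S (h𝕋.isTree S hS)).1 hS)
  obtain ⟨P, hP, hPS, rfl⟩ := c.exists_treeImage_eq h𝕋 hT hc hS hR hRS
  refine ⟨P, hP, hPS, Set.eq_empty_of_forall_notMem fun y ⟨hyX, hyP⟩ => ?_⟩
  rw [c.branches_treeImage (h𝕋.prefixClosed hT) (h𝕋.prefixClosed hP)] at hXR
  exact hXR.subset ⟨hyX, y, hyP, rfl⟩

lemma isNullBelow_image {Y : Set (ℕ → ℕ)} (hY : Y ∈ treeIdeal 𝕋) :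
    IsNullBelow 𝕋 T (c.branchMap '' Y) := by
  intro R hR hRT
  have hRuniv : R ⊆ c.treeImage Set.univ := by
    refine h𝕋.subset_of_branches_subset hR ((branches_mono hRT).trans ?_)
    rw [c.branches_treeImage (h𝕋.prefixClosed hT) (S := Set.univ) fun _ _ _ _ => trivial,
      branches_univ, Set.image_univ, c.range_branchMap]
  obtain ⟨P, hP, -, rfl⟩ := c.exists_treeImage_eq h𝕋 hT hc h𝕋.univ_mem hR hRuniv
  obtain ⟨S, hS, hSP, hYS⟩ := hY P hP
  refine ⟨c.treeImage S, (hc S (h𝕋.isTree S hS)).1 hS, c.treeImage_mono hSP, ?_⟩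
  rw [c.branches_treeImage (h𝕋.prefixClosed hT) (h𝕋.prefixClosed hS),
    ← Set.image_inter c.isEmbedding.injective, hYS, Set.image_empty]

end TreeCopy

section treeIdeal

variable {𝕋 : Set (Set (List ℕ))}

lemma empty_mem_treeIdeal : ∅ ∈ treeIdeal 𝕋 :=
  fun T hT => ⟨T, hT, subset_rfl, Set.empty_inter _⟩

lemma union_mem_treeIdeal {X Y : Set (ℕ → ℕ)} (hX : X ∈ treeIdeal 𝕋) (hY : Y ∈ treeIdeal 𝕋) :
    X ∪ Y ∈ treeIdeal 𝕋 := by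
  intro T hT
  obtain ⟨S, hS, hST, hXS⟩ := hX T hT
  obtain ⟨R, hR, hRS, hYR⟩ := hY S hS
  refine ⟨R, hR, hRS.trans hST, ?_⟩
  rw [Set.union_inter_distrib_right, hYR, Set.union_empty]
  exact Set.subset_empty_iff.1 (hXS ▸ Set.inter_subset_inter_right X (branches_mono hRS))

lemma sUnion_mem_treeIdeal {J : Set (Set (ℕ → ℕ))} (hJI : J ⊆ treeIdeal 𝕋) (hJ : J.Finite) :
    ⋃₀ J ∈ treeIdeal 𝕋 := by
  induction J, hJ using Set.Finite.induction_on with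
  | empty => simpa using empty_mem_treeIdeal
  | @insert X J _ _ ih =>
    rw [Set.sUnion_insert]
    exact union_mem_treeIdeal (hJI (Set.mem_insert X J))
      (ih ((Set.subset_insert X J).trans hJI))

variable (h𝕋 : CombTreeForcing 𝕋)
include h𝕋

lemma singleton_mem_treeIdeal (x : ℕ → ℕ) : {x} ∈ treeIdeal 𝕋 := by
  intro T hT
  obtain ⟨x', hx'T, hx'x⟩ := (h𝕋.branches_nontrivial hT).exists_ne x
  obtain ⟨n, hn⟩ := exists_seqRestrict_ne hx'x
  refine ⟨subtreeThrough T (seqRestrict x' n), h𝕋.restrict_mem T hT _ (hx'T n),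
    Set.sep_subset _ _, Set.eq_empty_of_forall_notMem fun y ⟨hy, hyS⟩ => hn ?_⟩
  rw [Set.mem_singleton_iff.1 hy] at hyS
  simpa using (seqRestrict_eq_of_mem_branches_subtreeThrough hyS).symm

lemma univ_notMem_treeIdeal : Set.univ ∉ treeIdeal 𝕋 := fun h => by
  obtain ⟨S, hS, -, hSempty⟩ := h _ h𝕋.univ_mem
  rw [Set.univ_inter] at hSempty
  exact (h𝕋.branches_nontrivial hS).nonempty.ne_empty hSempty

lemma aleph0_le_idealCof_treeIdeal : Cardinal.aleph0 ≤ idealCof (treeIdeal 𝕋) :=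
  aleph0_le_idealCof (fun _ => sUnion_mem_treeIdeal) (singleton_mem_treeIdeal h𝕋)
    (univ_notMem_treeIdeal h𝕋)

end treeIdeal

lemma iUnion_mem_treeIdeal {𝕋 : Set (Set (List ℕ))} {ι : Type*} {T : ι → Set (List ℕ)}
    (hmax : ∀ R ∈ 𝕋, ∃ a, Compat 𝕋 R (T a))
    (hdisj : ∀ a b, a ≠ b → branches (T a) ∩ branches (T b) = ∅)
    {Z : ι → Set (ℕ → ℕ)} (hZT : ∀ a, Z a ⊆ branches (T a)) (hZ : ∀ a, IsNullBelow 𝕋 (T a) (Z a)) :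
    ⋃ a, Z a ∈ treeIdeal 𝕋 := by
  intro R₀ hR₀
  obtain ⟨a, R, hR, hRR₀, hRT⟩ := hmax R₀ hR₀
  obtain ⟨S, hS, hSR, hZS⟩ := hZ a R hR hRT
  refine ⟨S, hS, hSR.trans hRR₀, Set.eq_empty_of_forall_notMem fun z ⟨hz, hzS⟩ => ?_⟩
  obtain ⟨b, hzb⟩ := Set.mem_iUnion.1 hz
  obtain rfl | hba := eq_or_ne b a
  · exact hZS.subset ⟨hzb, hzS⟩
  · exact (hdisj b a hba).subset ⟨hZT b hzb, branches_mono (hSR.trans hRT) hzS⟩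

/-- If a combinatorial tree forcing `𝕋` has the disjoint maximal antichain property, then
`cf(cof(t⁰)) > 𝔠 = 2^{ℵ₀}`. -/
theorem cof_treeIdeal_of_disjointMaxAntichain (𝕋 : Set (Set (List ℕ)))
    (hctf : CombTreeForcing 𝕋) (hdmap : DisjointMaxAntichainProp 𝕋) :
    Cardinal.continuum < (idealCof (treeIdeal 𝕋)).ord.cof := by
  obtain ⟨ι, T, hι, hT, -, hmax, hdisj⟩ := hdmap
  obtain ⟨J, hJI, hJ, hJcof⟩ := exists_cofinal_card_eq_idealCof (treeIdeal 𝕋)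
  by_contra! hcf
  obtain ⟨F, hF, hJF⟩ := Cardinal.exists_iUnion_eq_univ_of_cof_ord_le (α := J) (ι := ι)
    (hJ ▸ aleph0_le_idealCof_treeIdeal hctf) (by rwa [hJ, hι])
  choose c hc using fun a => hctf.exists_treeCopy (hT a)
  have hY (a : ι) : ∃ Y ∈ treeIdeal 𝕋, ∀ X : F a, ¬ Y ⊆ (c a).branchMap ⁻¹' X.1 :=
    exists_forall_not_subset_of_lt_idealCof
      (fun X => (c a).preimage_mem_treeIdeal hctf (hT a) (hc a) (hJI X.1.2)) (hJ ▸ hF a)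
  choose Y hYI hYF using hY
  obtain ⟨X, hXJ, hYX⟩ := hJcof (⋃ a, (c a).branchMap '' Y a) <| iUnion_mem_treeIdeal hmax hdisj
    (fun a => Set.image_subset_iff.2 fun x _ => (c a).branchMap_mem_branches x)
    (fun a => (c a).isNullBelow_image hctf (hT a) (hc a) (hYI a))
  obtain ⟨a, hXa⟩ := Set.mem_iUnion.1 (hJF ▸ Set.mem_univ (⟨X, hXJ⟩ : J))
  exact hYF a ⟨_, hXa⟩ (Set.image_subset_iff.1 ((Set.subset_iUnion _ a).trans hYX))
end

section
/- Silver forcing has the incompatibility shrinking property: for every Silver condition T, every cardinal μ < 𝔠, and every family (S_α : α < μ) of Silver conditions each incompatible with T, there is a Silver condition T' ⊆ T such that [T'] ∩ [S_α] = ∅ for all α < μ. -/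
/-!
Write `T = silverTree p` and `S a = silverTree (q a)`. If `p` and `q a` agree wherever both are
defined and have infinitely many common holes, their union is a common Silver extension, so
incompatibility means that `p` and `q a` conflict somewhere or share only finitely many holes.
Split the set `H` of holes of `p` into infinite sets `A` and `H \ A` and fill `A` with values
`y : A → Bool`. Each `q a` of the second kind is defined at all but finitely many points of `A`,
so only finitely many `y` agree with it on `A`; fewer than `𝔠` finite sets do not cover `2^A`, so
some `y` conflicts with every such `q a`, and the others conflict with `p` already.
-/

/-- The restriction `x↾n` of `x ∈ 2^ω` to its first `n` values, as a finite binary sequence. -/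
def seqRestrict2 (x : ℕ → Bool) (n : ℕ) : List Bool := List.ofFn fun i : Fin n => x i

/-- A tree on `2`: a nonempty set of finite binary sequences closed under initial segments. -/
def IsSeqTree2 (T : Set (List Bool)) : Prop :=
  T.Nonempty ∧ ∀ s ∈ T, ∀ t : List Bool, t <+: s → t ∈ T

/-- `[T]`, the set of branches of a tree `T ⊆ 2^{<ω}`. -/
def branches2 (T : Set (List Bool)) : Set (ℕ → Bool) := {x | ∀ n : ℕ, seqRestrict2 x n ∈ T}

/-- The tree of a partial function `p : ω → 2`: finite binary sequences agreeing with `p`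
on the domain of `p`. -/
def silverTree (p : ℕ → Option Bool) : Set (List Bool) :=
  {s | ∀ (n : ℕ) (h : n < s.length) (b : Bool), p n = some b → s.get ⟨n, h⟩ = b}

/-- A Silver condition: a tree determined by a partial function `p : ω → 2` whose domain
has infinite complement. -/
def IsSilver (T : Set (List Bool)) : Prop :=
  ∃ p : ℕ → Option Bool, {n : ℕ | p n = none}.Infinite ∧ T = silverTree p

theorem Set.Infinite.exists_subset_infinite_diff_infinite {α : Type*} {H : Set α}
    (hH : H.Infinite) : ∃ A ⊆ H, A.Infinite ∧ (H \ A).Infinite := by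
  set e := hH.natEmbedding H
  have he : Function.Injective fun k => (e k : α) := Subtype.val_injective.comp e.injective
  refine ⟨Set.range fun k => (e (2 * k) : α), ?_, ?_, ?_⟩
  · rintro _ ⟨k, rfl⟩
    exact (e (2 * k)).2
  · exact Set.infinite_range_of_injective (he.comp fun k l h => by simpa using h)
  · refine (Set.infinite_range_of_injective (f := fun k => (e (2 * k + 1) : α))
      (he.comp fun k l h => by simpa using h)).mono ?_
    rintro _ ⟨k, rfl⟩
    refine ⟨(e _).2, ?_⟩
    rintro ⟨l, hl⟩
    have := he hl
    omega

open Cardinal in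
theorem Cardinal.exists_forall_notMem_of_finite {ι X : Type u} (F : ι → Set X)
    (hF : ∀ i, (F i).Finite) (hι : #ι < #X) (hX : ℵ₀ < #X) : ∃ x, ∀ i, x ∉ F i := by
  have hcover : #(⋃ i, F i) < #X :=
    calc #(⋃ i, F i) ≤ sum fun i => #(F i) := mk_iUnion_le_sum_mk
      _ ≤ sum fun _ : ι => ℵ₀ := sum_le_sum _ _ fun i => (hF i).lt_aleph0.le
      _ = #ι * ℵ₀ := sum_const' _ _
      _ < #X := mul_lt_of_lt hX.le hι hX
  obtain ⟨x, hx⟩ := (Set.ne_univ_iff_exists_notMem (⋃ i, F i)).1 fun h => by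
    rw [h, mk_univ] at hcover
    exact hcover.false
  exact ⟨x, fun i hi => hx (Set.mem_iUnion_of_mem i hi)⟩

theorem Set.finite_setOf_forall_eq_of_finite_none {α β : Type*} [Finite β] (g : α → Option β)
    (hg : {a | g a = none}.Finite) : {y : α → β | ∀ a b, g a = some b → y a = b}.Finite := by
  have : Finite {a // g a = none} := hg.to_subtype
  refine Set.finite_coe_iff.1 (Finite.of_injective
    (fun (y : {y : α → β | ∀ a b, g a = some b → y a = b}) (a : {a // g a = none}) => y.1 a) ?_)
  intro y z hyz
  ext a
  cases ha : g a with
  | none => exact congrFun hyz ⟨a, ha⟩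
  | some b => rw [y.2 a b ha, z.2 a b ha]

lemma mem_branches2_silverTree_iff {p : ℕ → Option Bool} {x : ℕ → Bool} :
    x ∈ branches2 (silverTree p) ↔ ∀ n b, p n = some b → x n = b := by
  simp only [branches2, silverTree, seqRestrict2, Set.mem_ofPred_eq, List.get_eq_getElem,
    List.getElem_ofFn, List.length_ofFn]
  exact ⟨fun hx n b hb => by simpa using hx (n + 1) n (by omega) b hb,
    fun hx _ n _ b hb => by simpa using hx n b hb⟩

lemma silverTree_subset_silverTree {p r : ℕ → Option Bool}
    (h : ∀ n b, p n = some b → r n = some b) : silverTree r ⊆ silverTree p :=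
  fun _ hs n hn b hb => hs n hn b (h n b hb)

lemma branches2_silverTree_inter_eq_empty {p q : ℕ → Option Bool} {n : ℕ} {b c : Bool}
    (hp : p n = some b) (hq : q n = some c) (hbc : b ≠ c) :
    branches2 (silverTree p) ∩ branches2 (silverTree q) = ∅ := by
  refine Set.eq_empty_iff_forall_notMem.2 fun x ⟨hxp, hxq⟩ => hbc ?_
  rw [mem_branches2_silverTree_iff] at hxp hxq
  rw [← hxp n b hp, hxq n c hq]

lemma exists_conflict_of_incompatible {p q : ℕ → Option Bool}
    (hpq : ¬ ∃ R, IsSilver R ∧ R ⊆ silverTree p ∧ R ⊆ silverTree q)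
    (hinf : {n | p n = none ∧ q n = none}.Infinite) :
    ∃ n b c, p n = some b ∧ q n = some c ∧ b ≠ c := by
  by_contra! hagree
  refine hpq ⟨silverTree fun n => (p n).or (q n), ⟨_, ?_, rfl⟩,
    silverTree_subset_silverTree fun n b hb => ?_, silverTree_subset_silverTree fun n c hc => ?_⟩
  · simpa only [Option.or_eq_none_iff] using hinf
  · simp [hb]
  · cases hp : p n with
    | none => simp [hc]
    | some b => simp [hagree n b c hp hc]

open Classical in
noncomputable def fillOn (p : ℕ → Option Bool) (A : Set ℕ) (y : A → Bool) : ℕ → Option Bool :=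
  fun n => if h : n ∈ A then some (y ⟨n, h⟩) else p n

open Cardinal in
lemma exists_forall_exists_ne_of_finite_none {ι X : Type u} [Countable X] [Infinite X]
    (q : ι → X → Option Bool) (hq : ∀ a, {x | q a x = none}.Finite) (hι : #ι < 𝔠) :
    ∃ y : X → Bool, ∀ a, ∃ x b, q a x = some b ∧ y x ≠ b := by
  have hX : #(X → Bool) = 𝔠 := by
    simp [mk_eq_aleph0]
  obtain ⟨y, hy⟩ := exists_forall_notMem_of_finite
    (fun a => {y : X → Bool | ∀ x b, q a x = some b → y x = b})
    (fun a => Set.finite_setOf_forall_eq_of_finite_none _ (hq a)) (hX ▸ hι)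
    (hX ▸ aleph0_lt_continuum)
  exact ⟨y, fun a => by simpa only [Set.mem_ofPred_eq, not_forall, exists_prop] using hy a⟩

section fillOn

variable {p : ℕ → Option Bool} {A : Set ℕ} (y : A → Bool)

lemma fillOn_of_mem {n : ℕ} (hn : n ∈ A) : fillOn p A y n = some (y ⟨n, hn⟩) :=
  dif_pos hn

lemma fillOn_eq_some (hA : A ⊆ {n | p n = none}) {n : ℕ} {b : Bool} (hb : p n = some b) :
    fillOn p A y n = some b := by
  have hn : n ∉ A := fun hn => Option.some_ne_none b (hb.symm.trans (hA hn))
  simp [fillOn, hn, hb]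

lemma setOf_fillOn_eq_none : {n | fillOn p A y n = none} = {n | p n = none} \ A := by
  ext n
  by_cases hn : n ∈ A <;> simp [fillOn, hn]

end fillOn

/-- Silver forcing has the incompatibility shrinking property: for every Silver condition `T`
and every family of fewer than continuum many Silver conditions each incompatible with `T`,
there is a Silver condition `T' ⊆ T` whose branch set avoids all their branch sets. -/
theorem silver_incompatShrinking (T : Set (List Bool)) (hT : IsSilver T)
    (ι : Type) (hcard : Cardinal.mk ι < Cardinal.continuum)
    (S : ι → Set (List Bool)) (hS : ∀ a : ι, IsSilver (S a))
    (hincompat : ∀ a : ι, ¬ ∃ R : Set (List Bool), IsSilver R ∧ R ⊆ T ∧ R ⊆ S a) :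
    ∃ T' : Set (List Bool), IsSilver T' ∧ T' ⊆ T ∧
      ∀ a : ι, branches2 T' ∩ branches2 (S a) = ∅ := by
  obtain ⟨p, hp, rfl⟩ := hT
  choose q hq hSq using hS
  obtain ⟨A, hAp, hA, hpA⟩ := hp.exists_subset_infinite_diff_infinite
  have : Infinite A := hA.to_subtype
  obtain ⟨y, hy⟩ := exists_forall_exists_ne_of_finite_none (X := A)
    (fun (a : {a // {n | p n = none ∧ q a n = none}.Finite}) (n : A) => q a n)
    (fun a => (a.2.preimage Subtype.val_injective.injOn).subset fun n hn => ⟨hAp n.2, hn⟩)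
    ((Cardinal.mk_subtype_le _).trans_lt hcard)
  refine ⟨silverTree (fillOn p A y), ⟨_, ?_, rfl⟩,
    silverTree_subset_silverTree fun n b => fillOn_eq_some y hAp, fun a => ?_⟩
  · rwa [setOf_fillOn_eq_none]
  rw [hSq a]
  by_cases ha : {n | p n = none ∧ q a n = none}.Finite
  · obtain ⟨n, b, hb, hyb⟩ := hy ⟨a, ha⟩
    exact branches2_silverTree_inter_eq_empty (fillOn_of_mem y n.2) hb hyb
  · obtain ⟨n, b, c, hb, hc, hbc⟩ := exists_conflict_of_incompatible (hSq a ▸ hincompat a) ha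
    exact branches2_silverTree_inter_eq_empty (fillOn_eq_some y hAp hb) hc hbc
end

section
/- The cofinality of the cardinal cof(s⁰) is strictly greater than 𝔠, where s⁰ is the Marczewski ideal: cf(cof(s⁰)) > 2^{ℵ₀}. -/
/-- A perfect tree (Sacks condition): every node has an extension in the tree both of whose
immediate successors are in the tree. -/
def PerfectTree (T : Set (List Bool)) : Prop :=
  IsSeqTree2 T ∧ ∀ s ∈ T, ∃ t ∈ T, s <+: t ∧ t ++ [false] ∈ T ∧ t ++ [true] ∈ T

/-- The cofinality `cof(I)` of an ideal `I` on `2^ω`: the least cardinality of a family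
`J ⊆ I` such that every member of `I` is contained in a member of `J`. -/
noncomputable def idealCof2 (I : Set (Set (ℕ → Bool))) : Cardinal :=
  sInf {c : Cardinal | ∃ J ⊆ I, Cardinal.mk J = c ∧ ∀ X ∈ I, ∃ Y ∈ J, X ⊆ Y}

/-- The Marczewski ideal `s⁰`: all `X ⊆ 2^ω` such that every perfect tree has a perfect
subtree whose branch set avoids `X`. -/
def marczewskiIdeal : Set (Set (ℕ → Bool)) :=
  {X | ∀ T : Set (List Bool), PerfectTree T →
    ∃ S : Set (List Bool), PerfectTree S ∧ S ⊆ T ∧ X ∩ branches2 S = ∅}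

/-!
Work with perfect sets instead of perfect trees and split `2^ℕ ≅ 2^ℕ × 2^ℕ` into the columns
`{a} × 2^ℕ`. Every set of size `< 𝔠` is in `s⁰`, and a transfinite construction of length `𝔠` that
kills each perfect set by a perfect subset lying in one column or meeting every column in a
countable set yields some `E ∈ s⁰` of size `𝔠`. A Fubini-type argument shows that
`⋃_{a ∈ E} {a} × X_a ∈ s⁰` whenever every `X_a ∈ s⁰`. If `cf(cof(s⁰)) ≤ 𝔠`, a cofinal family `J`
of size `κ = cof(s⁰)` is the union of pieces `J_a`, `a ∈ E`, of size `< κ`. The sections at `a` of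
the members of `J_a` are not cofinal, so some `X_a ∈ s⁰` is covered by none of them, and then no
member of `J` covers `⋃_{a ∈ E} {a} × X_a`.
-/

universe u

open Set Function Topology Cardinal

section SetTheory

theorem continuum_le_mk_of_injective {X : Type*} {f : (ℕ → Bool) → X} (hf : Injective f) :
    𝔠 ≤ #X := by
  simpa using lift_mk_le_lift_mk_of_injective hf

theorem exists_notMem_of_mk_lt {α : Type*} {s : Set α} (h : #s < #α) : ∃ x, x ∉ s := by
  by_contra! hs
  rw [eq_univ_of_forall hs, mk_univ] at h
  exact h.false

theorem Set.Countable.mk_lt_continuum {α : Type*} {s : Set α} (hs : s.Countable) : #s < 𝔠 :=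
  (mk_le_aleph0_iff.2 hs.to_subtype).trans_lt aleph0_lt_continuum

theorem mk_biUnion_lt_continuum {ι α : Type u} {s : Set ι} (hs : #s < 𝔠) {f : ι → Set α}
    (hf : ∀ i ∈ s, (f i).Countable) : #(⋃ i ∈ s, f i) < 𝔠 :=
  (mk_biUnion_le f s).trans_lt <| mul_lt_of_lt aleph0_le_continuum hs <|
    (ciSup_le' fun i : s => mk_le_aleph0_iff.2 (hf i.1 i.2).to_subtype).trans_lt aleph0_lt_continuum

theorem Cardinal.exists_cover_mk_lt_of_ord_cof_le {α ι : Type u} (hα : ℵ₀ ≤ #α)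
    (hι : (#α).ord.cof ≤ #ι) : ∃ P : ι → Set α, (∀ i, #(P i) < #α) ∧ ∀ a, ∃ i, a ∈ P i := by
  let O := (#α).ord.ToType
  obtain ⟨g⟩ : Nonempty (O ≃ α) := Cardinal.eq.1 (mk_ord_toType _)
  obtain ⟨s, hs, hscard⟩ := Order.exists_cof_eq O
  rw [Ordinal.cof_toType] at hscard
  have : Nonempty α := infinite_iff.2 hα |>.nonempty
  have : Nonempty s := by
    obtain ⟨b, hb, -⟩ := hs (g.symm (Classical.arbitrary α))
    exact ⟨⟨b, hb⟩⟩
  obtain ⟨emb⟩ := (le_def _ _).1 (hscard.trans_le hι)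
  have hIic (b : O) : #(Iic b) < #α := by
    rw [← Iio_insert]
    exact mk_insert_le.trans_lt <| add_lt_of_lt hα
      (by simpa [O] using mk_Iio_lt b (by simp [O])) (one_lt_aleph0.trans_le hα)
  refine ⟨fun i => g '' Iic (invFun emb i).1, fun i => mk_image_le.trans_lt (hIic _), fun a => ?_⟩
  obtain ⟨b, hb, hab⟩ := hs (g.symm a)
  obtain ⟨i, hi⟩ := invFun_surjective emb.injective ⟨b, hb⟩
  exact ⟨i, g.symm a, by rwa [hi], g.apply_symm_apply a⟩

theorem exists_forall_image_Iio {ι β : Type*} [LinearOrder ι] [WellFoundedLT ι] [Nonempty β]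
    (P : ι → Set β → β → Prop)
    (h : ∀ i (f : ι → β), (∀ j < i, P j (f '' Iio j) (f j)) → ∃ b, P i (f '' Iio i) b) :
    ∃ f : ι → β, ∀ i, P i (f '' Iio i) (f i) := by
  classical
  let F (i : ι) (prior : ∀ j, j < i → β) : β :=
    if hb : ∃ b, P i (range fun j : Iio i => prior j j.2) b then hb.choose
    else Classical.arbitrary β
  obtain ⟨f, hf⟩ : ∃ f : ι → β, ∀ i, f i = F i fun j _ => f j :=
    ⟨_, wellFounded_lt.fix_eq F⟩
  refine ⟨f, fun i => WellFoundedLT.induction (motive := fun i => P i (f '' Iio i) (f i)) i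
    fun i IH => ?_⟩
  have hex := h i f IH
  rw [image_eq_range] at hex ⊢
  rw [hf i]
  simp only [F, dif_pos hex]
  exact hex.choose_spec

end SetTheory

section Cantor

open PiNat

/-- `2^ℕ ≅ 2^ℕ × 2^ℕ`, splitting a sequence into its even and odd entries. -/
def natBoolHomeomorphProd : (ℕ → Bool) ≃ₜ (ℕ → Bool) × (ℕ → Bool) :=
  (Homeomorph.piCongrLeft Equiv.natSumNatEquivNat).symm.trans
    Homeomorph.sumArrowHomeomorphProdArrow

-- Instance search does not reach this through `IsCompletelyMetrizableSpace.pi_countable`.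
instance : PolishSpace (ℕ → Bool) :=
  have : TopologicalSpace.IsCompletelyMetrizableSpace (ℕ → Bool) := inferInstance
  inferInstance

theorem PiNat.exists_cylinder_subset {E : ℕ → Type*} [∀ n, TopologicalSpace (E n)]
    [∀ n, DiscreteTopology (E n)] {x : ∀ n, E n} {U : Set (∀ n, E n)} (hU : U ∈ 𝓝 x) :
    ∃ n, cylinder x n ⊆ U := by
  obtain ⟨_, ⟨y, n, rfl⟩, hx, hU⟩ := (isTopologicalBasis_cylinders E).mem_nhds_iff.1 hU
  exact ⟨n, by rwa [mem_cylinder_iff_eq.1 hx]⟩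

theorem perfect_univ_nat_bool : Perfect (univ : Set (ℕ → Bool)) := by
  refine ⟨isClosed_univ, preperfect_iff_nhds.2 fun x _ U hU => ?_⟩
  obtain ⟨n, hn⟩ := exists_cylinder_subset hU
  exact ⟨update x n (!x n), ⟨hn (PiNat.update_mem_cylinder x n _), trivial⟩,
    fun h => by simpa using congrFun h n⟩

end Cantor

section PerfectSets

variable {X Y : Type*} [TopologicalSpace X] [TopologicalSpace Y]

theorem Topology.IsClosedEmbedding.perfect_image {f : X → Y} (hf : IsClosedEmbedding f)
    {K : Set X} (hK : Perfect K) : Perfect (f '' K) := by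
  refine ⟨hf.isClosedMap K hK.closed, preperfect_iff_nhds.2 ?_⟩
  rintro _ ⟨x, hx, rfl⟩ U hU
  obtain ⟨y, ⟨hyU, hyK⟩, hyx⟩ :=
    preperfect_iff_nhds.1 hK.acc x hx _ (hf.continuous.continuousAt.preimage_mem_nhds hU)
  exact ⟨f y, ⟨hyU, mem_image_of_mem f hyK⟩, hf.injective.ne hyx⟩

theorem Topology.IsInducing.perfect_preimage {f : X → Y} (hf : IsInducing f) {K : Set Y}
    (hK : Perfect K) (hKf : K ⊆ range f) : Perfect (f ⁻¹' K) := by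
  refine ⟨hK.closed.preimage hf.continuous, preperfect_iff_nhds.2 fun x hx U hU => ?_⟩
  obtain ⟨V, hV, hVU⟩ := (hf.nhds_eq_comap x ▸ hU : U ∈ Filter.comap f (𝓝 (f x)))
  obtain ⟨_, ⟨hwV, hwK⟩, hwx⟩ := preperfect_iff_nhds.1 hK.acc (f x) hx V hV
  obtain ⟨u, rfl⟩ := hKf hwK
  exact ⟨u, ⟨hVU hwV, hwK⟩, fun h => hwx (h ▸ rfl)⟩

theorem Perfect.continuum_le_mk [PolishSpace X] {P : Set X} (hP : Perfect P) (hne : P.Nonempty) :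
    𝔠 ≤ #P := by
  let := TopologicalSpace.upgradeIsCompletelyMetrizable X
  obtain ⟨f, hfP, -, hf⟩ := hP.exists_nat_bool_injection hne
  exact continuum_le_mk_of_injective (f := codRestrict f P fun x => hfP ⟨x, rfl⟩)
    (hf.codRestrict _)

theorem Perfect.not_countable [PolishSpace X] {P : Set X} (hP : Perfect P) (hne : P.Nonempty) :
    ¬P.Countable := fun h =>
  (hP.continuum_le_mk hne).not_gt <|
    (mk_le_aleph0_iff.2 (countable_coe_iff.2 h)).trans_lt aleph0_lt_continuum

theorem continuum_le_mk_of_uncountable [PolishSpace X] [Uncountable X] : 𝔠 ≤ #X := by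
  obtain ⟨P, hP, hne, -⟩ := exists_perfect_nonempty_of_isClosed_of_not_countable isClosed_univ
    (by rw [countable_univ_iff]; exact not_countable (α := X))
  exact (hP.continuum_le_mk hne).trans (mk_set_le P)

theorem mk_setOf_isClosed_le_continuum [SecondCountableTopology X] :
    #{C : Set X | IsClosed C} ≤ 𝔠 := by
  obtain ⟨b, hbc, -, hb⟩ := TopologicalSpace.exists_countable_basis X
  have hcompl {C : Set X} (hC : IsClosed C) :
      Cᶜ = ⋃₀ (Subtype.val '' {s : b | (s : Set X) ⊆ Cᶜ}) := by
    conv_lhs => rw [hb.open_eq_sUnion' hC.isOpen_compl]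
    congr 1
    ext s
    simp [and_comm]
  have hinj : Injective fun C : {C : Set X | IsClosed C} => {s : b | (s : Set X) ⊆ C.1ᶜ} := by
    rintro ⟨C, hC⟩ ⟨D, hD⟩ hCD
    rw [Subtype.mk.injEq, ← compl_inj_iff, hcompl hC, hcompl hD]
    exact congrArg (fun t => ⋃₀ (Subtype.val '' t)) hCD
  calc #{C : Set X | IsClosed C} ≤ #(Set b) := mk_le_of_injective hinj
    _ = 2 ^ #b := mk_set
    _ ≤ 2 ^ ℵ₀ := power_le_power_left two_ne_zero (mk_le_aleph0_iff.2 hbc.to_subtype)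
    _ = 𝔠 := two_power_aleph0

end PerfectSets

theorem exists_enum_nonempty_perfect {X ι : Type u} [TopologicalSpace X] [SecondCountableTopology X]
    (hι : 𝔠 ≤ #ι) (hX : ∃ P : Set X, Perfect P ∧ P.Nonempty) :
    ∃ Q : ι → Set X, (∀ i, Perfect (Q i) ∧ (Q i).Nonempty) ∧
      ∀ P, Perfect P → P.Nonempty → ∃ i, Q i = P := by
  obtain ⟨P₀, hP₀, hP₀ne⟩ := hX
  have : Nonempty {P : Set X // Perfect P ∧ P.Nonempty} := ⟨⟨P₀, hP₀, hP₀ne⟩⟩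
  have hcard : #{P : Set X // Perfect P ∧ P.Nonempty} ≤ #ι :=
    (mk_le_of_injective (f := fun P => (⟨P.1, P.2.1.closed⟩ : {C : Set X | IsClosed C}))
      fun P P' h => Subtype.ext (by simpa using h)).trans (mk_setOf_isClosed_le_continuum.trans hι)
  obtain ⟨emb⟩ := (le_def _ _).1 hcard
  refine ⟨fun i => (invFun emb i).1, fun i => (invFun emb i).2, fun P hP hne => ?_⟩
  obtain ⟨i, hi⟩ := invFun_surjective emb.injective ⟨P, hP, hne⟩
  exact ⟨i, congrArg Subtype.val hi⟩

section MarczewskiNull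

variable {X Y : Type*} [TopologicalSpace X] [TopologicalSpace Y]

/-- Membership in Marczewski's ideal `s⁰`, phrased with perfect sets instead of perfect trees. -/
def IsMarczewskiNull (S : Set X) : Prop :=
  ∀ P, Perfect P → P.Nonempty → ∃ R ⊆ P, Perfect R ∧ R.Nonempty ∧ Disjoint R S

theorem isMarczewskiNull_empty : IsMarczewskiNull (∅ : Set X) :=
  fun P hP hne => ⟨P, subset_rfl, hP, hne, disjoint_empty P⟩

namespace IsMarczewskiNull

theorem mono {S T : Set X} (hT : IsMarczewskiNull T) (hST : S ⊆ T) : IsMarczewskiNull S :=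
  fun P hP hne =>
    let ⟨R, hRP, hR, hRne, hRT⟩ := hT P hP hne
    ⟨R, hRP, hR, hRne, hRT.mono_right hST⟩

theorem union {S T : Set X} (hS : IsMarczewskiNull S) (hT : IsMarczewskiNull T) :
    IsMarczewskiNull (S ∪ T) := fun P hP hne => by
  obtain ⟨R, hRP, hR, hRne, hRS⟩ := hS P hP hne
  obtain ⟨R', hR'R, hR', hR'ne, hR'T⟩ := hT R hR hRne
  exact ⟨R', hR'R.trans hRP, hR', hR'ne, disjoint_union_right.2 ⟨hRS.mono_left hR'R, hR'T⟩⟩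

theorem sUnion {𝒮 : Set (Set X)} (h𝒮 : 𝒮.Finite) (hnull : ∀ S ∈ 𝒮, IsMarczewskiNull S) :
    IsMarczewskiNull (⋃₀ 𝒮) := by
  induction 𝒮, h𝒮 using Set.Finite.induction_on with
  | empty => simpa using isMarczewskiNull_empty
  | insert _ _ ih =>
    rw [sUnion_insert]
    exact (hnull _ (mem_insert _ _)).union (ih fun S hS => hnull S (mem_insert_of_mem _ hS))

theorem not_superset {S P : Set X} (hS : IsMarczewskiNull S) (hP : Perfect P) (hne : P.Nonempty) :
    ¬P ⊆ S := fun hPS =>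
  let ⟨_, hRP, _, ⟨_, hx⟩, hRS⟩ := hS P hP hne
  hRS.notMem_of_mem_left hx (hPS (hRP hx))

theorem preimage {S : Set Y} (hS : IsMarczewskiNull S) {f : X → Y} (hf : IsClosedEmbedding f) :
    IsMarczewskiNull (f ⁻¹' S) := fun P hP hne => by
  obtain ⟨R, hRP, hR, hRne, hRS⟩ := hS _ (hf.perfect_image hP) (hne.image f)
  have hRf : R ⊆ range f := hRP.trans (image_subset_range f P)
  refine ⟨f ⁻¹' R, ?_, hf.isInducing.perfect_preimage hR hRf, ?_, hRS.preimage f⟩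
  · rw [← hf.injective.preimage_image P]
    exact preimage_mono hRP
  · obtain ⟨_, hx⟩ := hRne
    obtain ⟨x, rfl⟩ := hRf hx
    exact ⟨x, hx⟩

theorem of_mk_lt_continuum [PolishSpace X] {S : Set X} (hS : #S < 𝔠) : IsMarczewskiNull S := by
  intro P hP hne
  let := TopologicalSpace.upgradeIsCompletelyMetrizable X
  obtain ⟨f, hfP, hf, hfinj⟩ := hP.exists_nat_bool_injection hne
  let g := f ∘ natBoolHomeomorphProd.symm
  have hginj : Injective g := hfinj.comp natBoolHomeomorphProd.symm.injective
  -- the columns `g '' {z} × 2^ℕ` are `𝔠` many pairwise disjoint perfect subsets of `P`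
  have hcol (z : ℕ → Bool) : Perfect (range fun y => g (z, y)) := by
    have hemb : IsClosedEmbedding fun y => g (z, y) :=
      ((hf.comp natBoolHomeomorphProd.symm.continuous).comp
        (Continuous.prodMk_right z)).isClosedEmbedding (hginj.comp (Prod.mk_right_injective z))
    simpa using hemb.perfect_image perfect_univ_nat_bool
  by_contra! hmeet
  have hpick (z : ℕ → Bool) : ∃ y, g (z, y) ∈ S := by
    obtain ⟨_, ⟨y, rfl⟩, hy⟩ := not_disjoint_iff.1 <| hmeet _
      (by rintro _ ⟨y, rfl⟩; exact hfP (mem_range_self _)) (hcol z) (range_nonempty _)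
    exact ⟨y, hy⟩
  choose y hy using hpick
  have hinj : Injective fun z => (⟨g (z, y z), hy z⟩ : S) := fun z z' h =>
    congrArg Prod.fst (hginj (congrArg Subtype.val h))
  exact (continuum_le_mk_of_injective hinj).not_gt hS

end IsMarczewskiNull

end MarczewskiNull

section Products

variable {A B : Type*} [TopologicalSpace A] [TopologicalSpace B]

theorem isClosedEmbedding_prodMk [T1Space A] (a : A) : IsClosedEmbedding (Prod.mk a : B → A × B) :=
  ⟨isEmbedding_prodMkRight a, by
    convert (isClosed_singleton (x := a)).preimage continuous_fst
    ext ⟨a', b⟩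
    simp [eq_comm]⟩

theorem exists_perfect_subset_disjoint_of_slice [T1Space A] [SecondCountableTopology B]
    {Q S : Set (A × B)} (hQ : IsClosed Q) {a : A}
    (hQa : ¬(Prod.mk a ⁻¹' Q).Countable) (hSa : IsMarczewskiNull (Prod.mk a ⁻¹' S)) :
    ∃ R ⊆ Q, Perfect R ∧ R.Nonempty ∧ Disjoint R S := by
  obtain ⟨D, hD, hDne, hDQ⟩ := exists_perfect_nonempty_of_isClosed_of_not_countable
    (hQ.preimage (Continuous.prodMk_right a)) hQa
  obtain ⟨R, hRD, hR, hRne, hRS⟩ := hSa D hD hDne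
  refine ⟨Prod.mk a '' R, ?_, (isClosedEmbedding_prodMk a).perfect_image hR, hRne.image _, ?_⟩
  · exact image_subset_iff.2 (hRD.trans hDQ)
  · refine disjoint_left.2 ?_
    rintro _ ⟨b, hb, rfl⟩ hbS
    exact disjoint_left.1 hRS hb hbS

theorem exists_perfect_subset_disjoint_of_fst [PolishSpace A] [SecondCountableTopology B]
    [CompactSpace B] {Q S : Set (A × B)}
    (hQ : IsClosed Q) (hQfst : ¬(Prod.fst '' Q).Countable) (hS : IsMarczewskiNull (Prod.fst '' S)) :
    ∃ R ⊆ Q, Perfect R ∧ R.Nonempty ∧ Disjoint R S := by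
  obtain ⟨D, hD, hDne, hDQ⟩ := exists_perfect_nonempty_of_isClosed_of_not_countable
    (isClosedMap_fst_of_compactSpace Q hQ) hQfst
  obtain ⟨Z, hZD, hZ, hZne, hZS⟩ := hS D hD hDne
  have hC : ¬(Q ∩ Prod.fst ⁻¹' Z).Countable := fun hC => by
    refine hZ.not_countable hZne ((hC.image Prod.fst).mono fun z hz => ?_)
    obtain ⟨p, hp, rfl⟩ := hDQ (hZD hz)
    exact ⟨p, ⟨hp, hz⟩, rfl⟩
  obtain ⟨R, hR, hRne, hRC⟩ := exists_perfect_nonempty_of_isClosed_of_not_countable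
    (hQ.inter (hZ.closed.preimage continuous_fst)) hC
  refine ⟨R, hRC.trans inter_subset_left, hR, hRne, disjoint_left.2 fun p hpR hpS => ?_⟩
  exact disjoint_left.1 hZS (hRC hpR).2 (mem_image_of_mem _ hpS)

theorem IsMarczewskiNull.of_fst_image_of_slices [PolishSpace A] [PolishSpace B] [CompactSpace B]
    {S : Set (A × B)}
    (hfst : IsMarczewskiNull (Prod.fst '' S)) (hslice : ∀ a, IsMarczewskiNull (Prod.mk a ⁻¹' S)) :
    IsMarczewskiNull S := by
  intro Q hQ hne
  by_cases h : ∃ a, ¬(Prod.mk a ⁻¹' Q).Countable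
  · obtain ⟨a, ha⟩ := h
    exact exists_perfect_subset_disjoint_of_slice hQ.closed ha (hslice a)
  · push Not at h
    refine exists_perfect_subset_disjoint_of_fst hQ.closed (fun hc => hQ.not_countable hne ?_) hfst
    refine (hc.biUnion fun a _ => (h a).image (Prod.mk a)).mono ?_
    rintro ⟨a, b⟩ hp
    exact mem_biUnion ⟨_, hp, rfl⟩ ⟨b, hp, rfl⟩

theorem IsMarczewskiNull.iUnion_singleton_prod [PolishSpace A] [PolishSpace B] [CompactSpace B]
    {E : Set A}
    (hE : IsMarczewskiNull E) {S : E → Set B} (hS : ∀ x, IsMarczewskiNull (S x)) :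
    IsMarczewskiNull (⋃ x : E, {x.1} ×ˢ S x) := by
  refine of_fst_image_of_slices (hE.mono ?_) fun a => ?_
  · rintro _ ⟨p, hp, rfl⟩
    obtain ⟨x, hx⟩ := mem_iUnion.1 hp
    exact (mem_singleton_iff.1 (mem_prod.1 hx).1) ▸ x.2
  · by_cases ha : a ∈ E
    · refine (hS ⟨a, ha⟩).mono fun b hb => ?_
      obtain ⟨x, hx⟩ := mem_iUnion.1 hb
      obtain ⟨rfl : a = x.1, hb⟩ := mem_prod.1 hx
      exact hb
    · refine isMarczewskiNull_empty.mono fun b hb => ?_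
      obtain ⟨x, hx⟩ := mem_iUnion.1 hb
      obtain ⟨rfl : a = x.1, -⟩ := mem_prod.1 hx
      exact ha x.2

end Products

section Construction

variable {A B : Type u} [TopologicalSpace A] [TopologicalSpace B]

def AllButOneSliceCountable (W : Set (A × B)) : Prop :=
  ∃ a, ∀ a' ≠ a, (Prod.mk a' ⁻¹' W).Countable

theorem exists_perfect_subset_allButOneSliceCountable [T1Space A] [SecondCountableTopology B]
    {Q : Set (A × B)} (hQ : Perfect Q) (hne : Q.Nonempty) :
    ∃ W ⊆ Q, Perfect W ∧ W.Nonempty ∧ AllButOneSliceCountable W := by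
  by_cases h : ∃ a, ¬(Prod.mk a ⁻¹' Q).Countable
  · obtain ⟨a, ha⟩ := h
    obtain ⟨D, hD, hDne, hDQ⟩ := exists_perfect_nonempty_of_isClosed_of_not_countable
      (hQ.closed.preimage (Continuous.prodMk_right a)) ha
    refine ⟨Prod.mk a '' D, image_subset_iff.2 hDQ, (isClosedEmbedding_prodMk a).perfect_image hD,
      hDne.image _, a, fun a' ha' => (countable_empty.mono fun b hb => ?_)⟩
    obtain ⟨_, -, h⟩ := hb
    exact ha' (congrArg Prod.fst h).symm
  · push Not at h
    exact ⟨Q, subset_rfl, hQ, hne, hne.some.1, fun a _ => h a⟩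

/-- `(W, e)` is an admissible next stage, after the stages `prev`, of the construction of an
`(s⁰)` set of size `𝔠`: `W` is a perfect subset of `Q` missing all points chosen so far, and the new
point `e` misses all the perfect sets chosen so far and lies in a column not used before. -/
structure IsAdmissible (Q : Set (A × B)) (prev : Set (Set (A × B) × (A × B)))
    (p : Set (A × B) × (A × B)) : Prop where
  subset : p.1 ⊆ Q
  perfect : Perfect p.1
  nonempty : p.1.Nonempty
  allButOneSliceCountable : AllButOneSliceCountable p.1
  notMem : p.2 ∉ p.1
  prev_notMem : ∀ q ∈ prev, q.2 ∉ p.1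
  notMem_prev : ∀ q ∈ prev, p.2 ∉ q.1
  fst_ne : ∀ q ∈ prev, p.2.1 ≠ q.2.1

variable [PolishSpace A] [PolishSpace B] [Uncountable A] [Uncountable B]

theorem exists_isAdmissible {Q : Set (A × B)} (hQ : Perfect Q) (hne : Q.Nonempty)
    {prev : Set (Set (A × B) × (A × B))} (hprev : #prev < 𝔠)
    (hslices : ∀ q ∈ prev, AllButOneSliceCountable q.1) : ∃ p, IsAdmissible Q prev p := by
  obtain ⟨W₀, hW₀Q, hW₀, hW₀ne, aW, haW⟩ := exists_perfect_subset_allButOneSliceCountable hQ hne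
  obtain ⟨W, hWW₀, hW, hWne, hWprev⟩ := IsMarczewskiNull.of_mk_lt_continuum
    (S := Prod.snd '' prev) (mk_image_le.trans_lt hprev) W₀ hW₀ hW₀ne
  choose! col hcol using hslices
  -- a fresh column on which the slices of all the perfect sets are countable
  have hbadA : #↥(({aW} : Set A) ∪ col '' prev ∪ (fun q => q.2.1) '' prev) < 𝔠 :=
    (mk_union_le _ _).trans_lt <| add_lt_of_lt aleph0_le_continuum
      ((mk_union_le _ _).trans_lt <| add_lt_of_lt aleph0_le_continuum
        (countable_singleton aW).mk_lt_continuum (mk_image_le.trans_lt hprev))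
      (mk_image_le.trans_lt hprev)
  obtain ⟨a, ha⟩ := exists_notMem_of_mk_lt (hbadA.trans_le continuum_le_mk_of_uncountable)
  simp only [mem_union, mem_singleton_iff, mem_image, not_or, not_exists, not_and] at ha
  have hbadB : #↥(Prod.mk a ⁻¹' W ∪ ⋃ q ∈ prev, Prod.mk a ⁻¹' q.1) < 𝔠 :=
    (mk_union_le _ _).trans_lt <| add_lt_of_lt aleph0_le_continuum
      (((haW a ha.1.1).mono (preimage_mono hWW₀)).mk_lt_continuum)
      (mk_biUnion_lt_continuum hprev fun q hq => hcol q hq a fun h => ha.1.2 q hq h.symm)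
  obtain ⟨b, hb⟩ := exists_notMem_of_mk_lt (hbadB.trans_le continuum_le_mk_of_uncountable)
  simp only [mem_union, mem_iUnion, not_or, not_exists] at hb
  exact ⟨(W, (a, b)), hWW₀.trans hW₀Q, hW, hWne,
    ⟨aW, fun a' h => (haW a' h).mono (preimage_mono hWW₀)⟩, hb.1,
    fun q hq h => disjoint_left.1 hWprev h (mem_image_of_mem _ hq), fun q hq h => hb.2 q hq h,
    fun q hq h => ha.2 q hq h.symm⟩

theorem exists_isMarczewskiNull_continuum_le_mk :
    ∃ E : Set (A × B), IsMarczewskiNull E ∧ 𝔠 ≤ #E := by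
  let ι := (𝔠 : Cardinal.{u}).ord.ToType
  have hι : #ι = 𝔠 := mk_ord_toType _
  have hIio (i : ι) : #(Iio i) < 𝔠 := by simpa [ι] using mk_Iio_lt i (by simp [ι])
  obtain ⟨P, hP, hne, -⟩ := exists_perfect_nonempty_of_isClosed_of_not_countable isClosed_univ
    (by rw [countable_univ_iff]; exact not_countable (α := A × B))
  obtain ⟨Q, hQ, hQsurj⟩ := exists_enum_nonempty_perfect hι.ge ⟨P, hP, hne⟩
  obtain ⟨f, hf⟩ := exists_forall_image_Iio (fun i prev p => IsAdmissible (Q i) prev p)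
    fun i f IH => exists_isAdmissible (hQ i).1 (hQ i).2 (mk_image_le.trans_lt (hIio i))
      (by rintro _ ⟨j, hj, rfl⟩; exact (IH j hj).allButOneSliceCountable)
  have hdisj (i j : ι) : (f j).2 ∉ (f i).1 := by
    rcases lt_trichotomy j i with h | rfl | h
    · exact (hf i).prev_notMem _ ⟨j, h, rfl⟩
    · exact (hf j).notMem
    · exact (hf j).notMem_prev _ ⟨i, h, rfl⟩
  have hinj : Injective fun i => (f i).2 := by
    intro i j hij
    by_contra hne
    rcases lt_or_gt_of_ne hne with h | h
    · exact (hf j).fst_ne _ ⟨i, h, rfl⟩ (congrArg Prod.fst hij).symm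
    · exact (hf i).fst_ne _ ⟨j, h, rfl⟩ (congrArg Prod.fst hij)
  refine ⟨range fun i => (f i).2, fun P hP hne => ?_, by rw [mk_range_eq _ hinj, hι]⟩
  obtain ⟨i, rfl⟩ := hQsurj P hP hne
  exact ⟨(f i).1, (hf i).subset, (hf i).perfect, (hf i).nonempty,
    disjoint_left.2 fun x hx => by rintro ⟨j, rfl⟩; exact hdisj i j hx⟩

end Construction

theorem exists_isMarczewskiNull_nat_bool_continuum_le_mk :
    ∃ E : Set (ℕ → Bool), IsMarczewskiNull E ∧ 𝔠 ≤ #E := by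
  have : Uncountable (ℕ → Bool) := aleph0_lt_mk_iff.1 (by simp [aleph0_lt_continuum])
  obtain ⟨E, hE, hEc⟩ := exists_isMarczewskiNull_continuum_le_mk (A := ℕ → Bool) (B := ℕ → Bool)
  refine ⟨natBoolHomeomorphProd ⁻¹' E, hE.preimage natBoolHomeomorphProd.isClosedEmbedding, ?_⟩
  rwa [← Homeomorph.image_symm, mk_image_eq natBoolHomeomorphProd.symm.injective]

section Trees

open PiNat

@[simp] theorem length_seqRestrict2 (x : ℕ → Bool) (n : ℕ) : (seqRestrict2 x n).length = n := by
  simp [seqRestrict2]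

@[simp] theorem getElem_seqRestrict2 (x : ℕ → Bool) {n k : ℕ} (hk : k < (seqRestrict2 x n).length) :
    (seqRestrict2 x n)[k] = x k := by
  simp [seqRestrict2]

theorem seqRestrict2_eq_iff {x : ℕ → Bool} {n : ℕ} {s : List Bool} :
    seqRestrict2 x n = s ↔ s.length = n ∧ ∀ k (hk : k < s.length), s[k] = x k := by
  constructor
  · rintro rfl
    simp
  · rintro ⟨rfl, h⟩
    exact List.ext_getElem (by simp) fun k _ hk => by simp [h k hk]

theorem seqRestrict2_eq_seqRestrict2_iff {x y : ℕ → Bool} {n : ℕ} :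
    seqRestrict2 y n = seqRestrict2 x n ↔ y ∈ cylinder x n := by
  simp [seqRestrict2_eq_iff, mem_cylinder_iff, eq_comm]

theorem prefix_seqRestrict2_iff {s : List Bool} {x : ℕ → Bool} {n : ℕ} :
    s <+: seqRestrict2 x n ↔ s.length ≤ n ∧ seqRestrict2 x s.length = s := by
  simp [List.prefix_iff_getElem, seqRestrict2_eq_iff]

theorem seqRestrict2_succ (x : ℕ → Bool) (n : ℕ) :
    seqRestrict2 x (n + 1) = seqRestrict2 x n ++ [x n] := by
  rw [seqRestrict2, List.ofFn_succ_last]; rfl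

theorem seqRestrict2_getD (s : List Bool) :
    seqRestrict2 (fun k => s.getD k false) s.length = s := by
  simp +contextual [seqRestrict2_eq_iff]

theorem isOpen_setOf_seqRestrict2_mem (S : Set (List Bool)) (n : ℕ) :
    IsOpen {x | seqRestrict2 x n ∈ S} :=
  isOpen_iff_forall_mem_open.2 fun x hx =>
    ⟨cylinder x n, fun y hy => by rwa [mem_ofPred_eq, seqRestrict2_eq_seqRestrict2_iff.2 hy],
      isOpen_cylinder _ x n, self_mem_cylinder x n⟩

theorem isClosed_setOf_seqRestrict2_mem (S : Set (List Bool)) (n : ℕ) :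
    IsClosed {x | seqRestrict2 x n ∈ S} :=
  isOpen_compl_iff.1 (isOpen_setOf_seqRestrict2_mem Sᶜ n)

theorem isClosed_branches2 (T : Set (List Bool)) : IsClosed (branches2 T) := by
  simpa only [branches2, ofPred_forall] using
    isClosed_iInter fun n => isClosed_setOf_seqRestrict2_mem T n

theorem seqRestrict2_prefix_seqRestrict2 (x : ℕ → Bool) {m n : ℕ} (h : m ≤ n) :
    seqRestrict2 x m <+: seqRestrict2 x n :=
  prefix_seqRestrict2_iff.2 ⟨by simpa using h, by simp⟩

theorem PerfectTree.exists_extension_length_ge {T : Set (List Bool)} (hT : PerfectTree T)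
    {s : List Bool} (hs : s ∈ T) (n : ℕ) : ∃ t ∈ T, s <+: t ∧ n ≤ t.length := by
  induction n with
  | zero => exact ⟨s, hs, List.prefix_rfl, Nat.zero_le _⟩
  | succ n ih =>
    obtain ⟨t, ht, hst, hn⟩ := ih
    obtain ⟨u, -, htu, hu, -⟩ := hT.2 t ht
    refine ⟨u ++ [false], hu, hst.trans (htu.trans (List.prefix_append _ _)), ?_⟩
    simpa using hn.trans htu.length_le

theorem PerfectTree.exists_mem_branches2 {T : Set (List Bool)} (hT : PerfectTree T)
    {s : List Bool} (hs : s ∈ T) : ∃ x ∈ branches2 T, seqRestrict2 x s.length = s := by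
  let K : ℕ → Set (ℕ → Bool) := fun n =>
    {x | seqRestrict2 x s.length ∈ ({s} : Set (List Bool))} ∩ ⋂ m ≤ n, {x | seqRestrict2 x m ∈ T}
  have hclosed (n : ℕ) : IsClosed (K n) :=
    (isClosed_setOf_seqRestrict2_mem _ _).inter
      (isClosed_biInter fun m _ => isClosed_setOf_seqRestrict2_mem T m)
  have hne (n : ℕ) : (K n).Nonempty := by
    obtain ⟨t, ht, hst, hn⟩ := hT.exists_extension_length_ge hs n
    have hxt := seqRestrict2_getD t
    refine ⟨fun k => t.getD k false, ?_, mem_iInter₂.2 fun m hm => ?_⟩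
    · rw [← hxt] at hst
      exact (prefix_seqRestrict2_iff.1 hst).2
    · have hmt := seqRestrict2_prefix_seqRestrict2 (fun k => t.getD k false) (hm.trans hn)
      rw [hxt] at hmt
      exact hT.1.2 t ht _ hmt
  obtain ⟨x, hx⟩ := IsCompact.nonempty_iInter_of_sequence_nonempty_isCompact_isClosed K
    (fun n => inter_subset_inter_right _ (biInter_mono (fun m hm => Nat.le_succ_of_le hm)
      fun _ _ => subset_rfl)) hne (hclosed 0).isCompact hclosed
  rw [mem_iInter] at hx
  exact ⟨x, fun n => mem_iInter₂.1 (hx n).2 n le_rfl, (hx 0).1⟩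

theorem PerfectTree.perfect_branches2 {T : Set (List Bool)} (hT : PerfectTree T) :
    Perfect (branches2 T) := by
  refine ⟨isClosed_branches2 T, preperfect_iff_nhds.2 fun x hx U hU => ?_⟩
  obtain ⟨n, hn⟩ := exists_cylinder_subset hU
  obtain ⟨t, -, hxt, h0, h1⟩ := hT.2 _ (hx n)
  have hsplit (b : Bool) (hb : t ++ [b] ∈ T) :
      ∃ w ∈ branches2 T, w ∈ cylinder x n ∧ w t.length = b := by
    obtain ⟨w, hw, hwt⟩ := hT.exists_mem_branches2 hb
    have hwt' : seqRestrict2 w t.length ++ [w t.length] = t ++ [b] := by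
      simpa [seqRestrict2_succ] using hwt
    obtain ⟨hwt, hwb⟩ := List.append_inj' hwt' rfl
    refine ⟨w, hw, seqRestrict2_eq_seqRestrict2_iff.1 ?_, by simpa using hwb⟩
    rw [← hwt] at hxt
    simpa using (prefix_seqRestrict2_iff.1 hxt).2
  obtain ⟨w₀, hw₀, hw₀x, hw₀t⟩ := hsplit false h0
  obtain ⟨w₁, hw₁, hw₁x, hw₁t⟩ := hsplit true h1
  by_cases h : w₀ = x
  · exact ⟨w₁, ⟨hn hw₁x, hw₁⟩, fun h' => by simp [h', ← h, hw₀t] at hw₁t⟩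
  · exact ⟨w₀, ⟨hn hw₀x, hw₀⟩, h⟩

theorem PerfectTree.branches2_nonempty {T : Set (List Bool)} (hT : PerfectTree T) :
    (branches2 T).Nonempty :=
  let ⟨_, hs⟩ := hT.1.1
  let ⟨x, hx, _⟩ := hT.exists_mem_branches2 hs
  ⟨x, hx⟩

def treeOf (Q : Set (ℕ → Bool)) : Set (List Bool) := {s | ∃ x ∈ Q, ∃ n, seqRestrict2 x n = s}

theorem seqRestrict2_mem_treeOf {Q : Set (ℕ → Bool)} {x : ℕ → Bool} (hx : x ∈ Q) (n : ℕ) :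
    seqRestrict2 x n ∈ treeOf Q :=
  ⟨x, hx, n, rfl⟩

theorem treeOf_subset {Q : Set (ℕ → Bool)} {T : Set (List Bool)} (hQ : Q ⊆ branches2 T) :
    treeOf Q ⊆ T := by
  rintro s ⟨x, hx, n, rfl⟩
  exact hQ hx n

theorem branches2_treeOf {Q : Set (ℕ → Bool)} (hQ : IsClosed Q) : branches2 (treeOf Q) = Q := by
  refine Subset.antisymm (fun x hx => hQ.closure_subset_iff.2 subset_rfl ?_)
    fun x hx n => seqRestrict2_mem_treeOf hx n
  refine mem_closure_iff_nhds.2 fun U hU => ?_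
  obtain ⟨n, hn⟩ := exists_cylinder_subset hU
  obtain ⟨y, hy, m, hyx⟩ := hx n
  obtain rfl : m = n := by simpa using congrArg List.length hyx
  exact ⟨y, hn (seqRestrict2_eq_seqRestrict2_iff.1 hyx), hy⟩

theorem perfectTree_treeOf {Q : Set (ℕ → Bool)} (hQ : Perfect Q) (hne : Q.Nonempty) :
    PerfectTree (treeOf Q) := by
  refine ⟨⟨⟨_, seqRestrict2_mem_treeOf hne.some_mem 0⟩, ?_⟩, ?_⟩
  · rintro s ⟨x, hx, n, rfl⟩ t hts
    exact ⟨x, hx, _, (prefix_seqRestrict2_iff.1 hts).2⟩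
  · rintro s ⟨x, hx, n, rfl⟩
    obtain ⟨y, ⟨hyx, hy⟩, hne⟩ := preperfect_iff_nhds.1 hQ.acc x hx _
      ((isOpen_cylinder _ x n).mem_nhds (self_mem_cylinder x n))
    set m := firstDiff y x
    have hxy : seqRestrict2 y m = seqRestrict2 x m :=
      seqRestrict2_eq_seqRestrict2_iff.2 (mem_cylinder_firstDiff y x)
    have hx' := seqRestrict2_mem_treeOf hx (m + 1)
    have hy' := seqRestrict2_mem_treeOf hy (m + 1)
    rw [seqRestrict2_succ] at hx' hy'
    rw [hxy] at hy'
    refine ⟨seqRestrict2 x m, seqRestrict2_mem_treeOf hx m,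
      seqRestrict2_prefix_seqRestrict2 x ((mem_cylinder_iff_le_firstDiff hne _).1 hyx), ?_⟩
    have hm : y m ≠ x m := apply_firstDiff_ne hne
    cases hxm : x m <;> cases hym : y m <;> simp_all

theorem mem_marczewskiIdeal_iff {X : Set (ℕ → Bool)} :
    X ∈ marczewskiIdeal ↔ IsMarczewskiNull X := by
  constructor
  · intro hX P hP hne
    obtain ⟨S, hS, hST, hSX⟩ := hX (treeOf P) (perfectTree_treeOf hP hne)
    refine ⟨branches2 S, ?_, hS.perfect_branches2, hS.branches2_nonempty, ?_⟩
    · rw [← branches2_treeOf hP.closed]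
      exact fun x hx n => hST (hx n)
    · rwa [disjoint_iff_inter_eq_empty, inter_comm]
  · intro hX T hT
    obtain ⟨R, hRT, hR, hRne, hRX⟩ := hX _ hT.perfect_branches2 hT.branches2_nonempty
    refine ⟨treeOf R, perfectTree_treeOf hR hRne, treeOf_subset hRT, ?_⟩
    rwa [branches2_treeOf hR.closed, inter_comm, ← disjoint_iff_inter_eq_empty]

end Trees

section Cofinality

variable {I : Set (Set (ℕ → Bool))}

theorem idealCof2_le_mk {J : Set (Set (ℕ → Bool))} (hJI : J ⊆ I)
    (hJ : ∀ X ∈ I, ∃ Y ∈ J, X ⊆ Y) : idealCof2 I ≤ #J :=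
  csInf_le' ⟨J, hJI, rfl, hJ⟩

theorem exists_mk_eq_idealCof2 (I : Set (Set (ℕ → Bool))) :
    ∃ J ⊆ I, #J = idealCof2 I ∧ ∀ X ∈ I, ∃ Y ∈ J, X ⊆ Y :=
  csInf_mem (s := {c | ∃ J ⊆ I, #J = c ∧ ∀ X ∈ I, ∃ Y ∈ J, X ⊆ Y})
    ⟨#I, I, subset_rfl, rfl, fun X hX => ⟨X, hX, subset_rfl⟩⟩

theorem aleph0_le_idealCof2 (hsingle : ∀ x, {x} ∈ I) (hfin : ∀ J ⊆ I, J.Finite → ⋃₀ J ∈ I)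
    (huniv : (Set.univ : Set (ℕ → Bool)) ∉ I) : ℵ₀ ≤ idealCof2 I := by
  obtain ⟨J, hJI, hJ, hcof⟩ := exists_mk_eq_idealCof2 I
  by_contra! h
  rw [← hJ, lt_aleph0_iff_set_finite] at h
  refine huniv ((sUnion_eq_univ_iff.2 fun x => ?_) ▸ hfin J hJI h)
  obtain ⟨Y, hY, hxY⟩ := hcof _ (hsingle x)
  exact ⟨Y, hY, hxY rfl⟩

theorem lt_ord_cof_idealCof2 (hI : ℵ₀ ≤ idealCof2 I) {ι : Type}
    (π : ι → Set (ℕ → Bool) → Set (ℕ → Bool)) (hπ : ∀ i, ∀ Y ∈ I, π i Y ∈ I)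
    (hπmono : ∀ i, Monotone (π i))
    (hglue : ∀ X : ι → Set (ℕ → Bool), (∀ i, X i ∈ I) → ∃ U ∈ I, ∀ i, X i ⊆ π i U) :
    #ι < (idealCof2 I).ord.cof := by
  obtain ⟨J, hJI, hJ, hcof⟩ := exists_mk_eq_idealCof2 I
  by_contra! h
  rw [← hJ] at hI h
  obtain ⟨P, hPsmall, hPcover⟩ := exists_cover_mk_lt_of_ord_cof_le hI h
  have hmiss (i : ι) : ∃ X ∈ I, ∀ Y ∈ P i, ¬X ⊆ π i Y := by
    by_contra! hcov
    refine (hPsmall i).not_ge (hJ ▸ ?_)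
    calc idealCof2 I ≤ #((fun Y : J => π i Y) '' P i) :=
          idealCof2_le_mk (by rintro _ ⟨Y, -, rfl⟩; exact hπ i Y (hJI Y.2))
            fun X hX => let ⟨Y, hY, hXY⟩ := hcov X hX; ⟨_, ⟨Y, hY, rfl⟩, hXY⟩
      _ ≤ #(P i) := mk_image_le
  choose X hXI hX using hmiss
  obtain ⟨U, hUI, hXU⟩ := hglue X hXI
  obtain ⟨Y, hYJ, hUY⟩ := hcof U hUI
  obtain ⟨i, hi⟩ := hPcover ⟨Y, hYJ⟩
  exact hX i _ hi ((hXU i).trans (hπmono i hUY))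

end Cofinality

/-- `cf(cof(s⁰)) > 𝔠` for the Marczewski ideal `s⁰`. -/
theorem cof_marczewskiIdeal : Cardinal.continuum < (idealCof2 marczewskiIdeal).ord.cof := by
  have hI : marczewskiIdeal = {X | IsMarczewskiNull X} := ext fun _ => mem_marczewskiIdeal_iff
  obtain ⟨E, hE, hEc⟩ := exists_isMarczewskiNull_nat_bool_continuum_le_mk
  let e := natBoolHomeomorphProd
  rw [hI]
  refine hEc.trans_lt (lt_ord_cof_idealCof2 ?_ (fun x Y => Prod.mk x.1 ⁻¹' (e.symm ⁻¹' Y))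
    (fun x Y hY => (hY.preimage e.symm.isClosedEmbedding).preimage (isClosedEmbedding_prodMk _))
    (fun x Y Y' h => preimage_mono (preimage_mono h)) fun X hX => ?_)
  · exact aleph0_le_idealCof2
      (fun x => IsMarczewskiNull.of_mk_lt_continuum (countable_singleton x).mk_lt_continuum)
      (fun J hJ hfin => IsMarczewskiNull.sUnion hfin hJ)
      fun h => h.not_superset perfect_univ_nat_bool univ_nonempty subset_rfl
  · refine ⟨e ⁻¹' ⋃ x : E, {x.1} ×ˢ X x,
      (hE.iUnion_singleton_prod hX).preimage e.isClosedEmbedding, fun x y hy => ?_⟩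
    simp only [mem_preimage, e.apply_symm_apply]
    exact mem_iUnion.2 ⟨x, mk_mem_prod rfl hy⟩
end
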